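/- (Descent step.) Let G ∈ U(3,1) be a 4×4 matrix all of whose entries lie in Z[ω], and suppose G₄₁ ≠ 0. Then there exist τ = (τ₁, τ₂) with τ₁, τ₂ ∈ Z[ω] and k ∈ ℤ with k ≡ |τ₁|² + |τ₂|² (mod 2), such that, setting t = √3·k, the (4,1) entry of the product R · N_(τ,t) · G satisfies |(R · N_(τ,t) · G)₄₁|² ≤ (31/36)·|G₄₁|². -/

import Mathlib

open Matrix Complex

/-- ω = (−1 + i√3)/2, a primitive cube root of unity. -/
noncomputable def ω : ℂ := (-1 + Complex.I * Real.sqrt 3) / 2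

/-- The Eisenstein integers Z[ω], as a subset of ℂ. -/
def Zω : Set ℂ := {z : ℂ | ∃ a b : ℤ, z = (a : ℂ) + (b : ℂ) * ω}

/-- The Hermitian form matrix J. -/
def Jm : Matrix (Fin 4) (Fin 4) ℂ := !![0,0,0,1; 0,1,0,0; 0,0,1,0; 1,0,0,0]

/-- Heisenberg translation N_(τ,t). -/
noncomputable def N (τ₁ τ₂ : ℂ) (t : ℝ) : Matrix (Fin 4) (Fin 4) ℂ :=
  !![1, -(starRingEnd ℂ) τ₁, -(starRingEnd ℂ) τ₂,
       (-((Complex.normSq τ₁ : ℂ) + (Complex.normSq τ₂ : ℂ)) + Complex.I * (t : ℝ)) / 2;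
     0, 1, 0, τ₁;
     0, 0, 1, τ₂;
     0, 0, 0, 1]

/-- Heisenberg rotation M_U = diag(1, U, 1). -/
def M (U : Matrix (Fin 2) (Fin 2) ℂ) : Matrix (Fin 4) (Fin 4) ℂ :=
  !![1, 0, 0, 0;
     0, U 0 0, U 0 1, 0;
     0, U 1 0, U 1 1, 0;
     0, 0, 0, 1]

/-- Heisenberg dilation A_r = diag(r, 1, 1, 1/r). -/
noncomputable def Ad (r : ℝ) : Matrix (Fin 4) (Fin 4) ℂ :=
  !![(r : ℂ), 0, 0, 0; 0, 1, 0, 0; 0, 0, 1, 0; 0, 0, 0, (r : ℂ)⁻¹]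

noncomputable def U₁ : Matrix (Fin 2) (Fin 2) ℂ := !![0, 1; 1, 0]
noncomputable def U₂ : Matrix (Fin 2) (Fin 2) ℂ := !![-ω, 0; 0, 1]

/-- The Heisenberg translation N₁ = N_((1,0)ᵀ, √3). -/
noncomputable def N₁ : Matrix (Fin 4) (Fin 4) ℂ := N 1 0 (Real.sqrt 3)

/-- The involution R. -/
def Rmat : Matrix (Fin 4) (Fin 4) ℂ := !![0,0,0,1; 0,-1,0,0; 0,0,-1,0; 1,0,0,0]

/-- The generators {N₁, M_{U₁}, M_{U₂}} of the stabilizer of ∞, as a subset of GL(4,ℂ). -/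
noncomputable def gens3 : Set (GL (Fin 4) ℂ) :=
  {g | (g : Matrix (Fin 4) (Fin 4) ℂ) = N₁ ∨ (g : Matrix (Fin 4) (Fin 4) ℂ) = M U₁ ∨
       (g : Matrix (Fin 4) (Fin 4) ℂ) = M U₂}

/-- The generators {U₁, U₂}, as a subset of GL(2,ℂ). -/
noncomputable def gens2 : Set (GL (Fin 2) ℂ) :=
  {g | (g : Matrix (Fin 2) (Fin 2) ℂ) = U₁ ∨ (g : Matrix (Fin 2) (Fin 2) ℂ) = U₂}

/-- The generators {N₁, M_{U₁}, M_{U₂}, R}, as a subset of GL(4,ℂ). -/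
noncomputable def gens4 : Set (GL (Fin 4) ℂ) :=
  {g | (g : Matrix (Fin 4) (Fin 4) ℂ) = N₁ ∨ (g : Matrix (Fin 4) (Fin 4) ℂ) = M U₁ ∨
       (g : Matrix (Fin 4) (Fin 4) ℂ) = M U₂ ∨ (g : Matrix (Fin 4) (Fin 4) ℂ) = Rmat}

/-!
Write `a, b, c, d` for the first column of `G`. The `(1,1)` entry of `Gᴴ J G = J` says
`2 Re(a/d) + |b/d|² + |c/d|² = 0`, and the `(4,1)` entry of `R N_(τ,t) G` is `d · E` with
`Re E = -(|b/d + τ₁|² + |c/d + τ₂|²)/2` and `Im E = Im(a/d - τ̄₁ b/d - τ̄₂ c/d) + t/2`.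
The covering radius of the Eisenstein lattice is `1/√3`, so `τ₁, τ₂` can be chosen with
`|Re E| ≤ 1/3`; since `t/2 = √3 k/2` runs through a coset of `√3 ℤ` as `k` runs through a parity
class, `k` can be chosen with `|Im E| ≤ √3/2`. Hence `|E|² ≤ 1/9 + 3/4 = 31/36`.
-/

open ComplexConjugate

lemma ω_re : ω.re = -1 / 2 := by simp [ω]

lemma ω_im : ω.im = √3 / 2 := by simp [ω]

lemma re_intCast_add_intCast_mul_ω (a b : ℤ) : ((a : ℂ) + b * ω).re = a - b / 2 := by
  simp only [add_re, intCast_re, mul_re, ω_re, intCast_im, ω_im, zero_mul, sub_zero]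
  ring

lemma im_intCast_add_intCast_mul_ω (a b : ℤ) : ((a : ℂ) + b * ω).im = b * (√3 / 2) := by
  simp [ω_re, ω_im]

lemma exists_normSq_eq_intCast_of_mem_Zω {τ : ℂ} (hτ : τ ∈ Zω) : ∃ n : ℤ, normSq τ = n := by
  obtain ⟨a, b, rfl⟩ := hτ
  refine ⟨a ^ 2 - a * b + b ^ 2, ?_⟩
  rw [normSq_apply, re_intCast_add_intCast_mul_ω, im_intCast_add_intCast_mul_ω]
  push_cast
  linear_combination ((b : ℝ) ^ 2 / 4) * Real.sq_sqrt (show (0 : ℝ) ≤ 3 by norm_num)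

lemma three_mul_sq_add_sq_le_one {a b : ℝ} (ha : 0 ≤ a) (ha' : a ≤ 1 / 2) (hb : 0 ≤ b)
    (hab : a + b ≤ 1) : 3 * a ^ 2 + b ^ 2 ≤ 1 := by
  nlinarith [mul_nonneg hb (sub_nonneg.2 hab), mul_nonneg ha (sub_nonneg.2 ha')]

/-- The perpendicular bisector `x + √3 y = 1` of `0` and `1 + ω` cuts the rectangle into two
pieces that are mapped onto each other by the point reflection in `(1 + ω)/2`. -/
lemma sq_add_sq_le_or_sub_sq_add_sub_sq_le {x y : ℝ} (hx : 0 ≤ x) (hx' : x ≤ 1 / 2)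
    (hy : 0 ≤ y) (hy' : y ≤ √3 / 2) :
    x ^ 2 + y ^ 2 ≤ 1 / 3 ∨ (x - 1 / 2) ^ 2 + (y - √3 / 2) ^ 2 ≤ 1 / 3 := by
  have hs : √3 ^ 2 = 3 := Real.sq_sqrt (by norm_num)
  have hs0 : 0 ≤ √3 := Real.sqrt_nonneg 3
  rcases le_total (x + √3 * y) 1 with h | h
  · left
    nlinarith [three_mul_sq_add_sq_le_one hx hx' (mul_nonneg hs0 hy) h]
  · right
    have hb : 0 ≤ √3 * (√3 / 2 - y) := mul_nonneg hs0 (by linarith)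
    nlinarith [three_mul_sq_add_sq_le_one (a := 1 / 2 - x) (by linarith) (by linarith) hb
      (by nlinarith)]

lemma exists_int_sq_add_sq_le (X Y : ℝ) :
    ∃ a b : ℤ, (X + a - b / 2) ^ 2 + (Y + b * (√3 / 2)) ^ 2 ≤ 1 / 3 := by
  have hs : 0 < √3 / 2 := by positivity
  set q := ⌊Y / (√3 / 2)⌋
  set p := round (X + q / 2)
  set x := X + q / 2 - p
  set y := Y - q * (√3 / 2)
  have hx : |x| ≤ 1 / 2 := abs_sub_round _
  have hy : 0 ≤ y := by
    have := Int.floor_le (Y / (√3 / 2))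
    rw [le_div_iff₀ hs] at this
    simp only [y, q]; linarith
  have hy' : y ≤ √3 / 2 := by
    have := Int.lt_floor_add_one (Y / (√3 / 2))
    rw [div_lt_iff₀ hs] at this
    simp only [y, q]; linarith
  rcases sq_add_sq_le_or_sub_sq_add_sub_sq_le (abs_nonneg x) hx hy hy' with h | h
  · refine ⟨-p, -q, ?_⟩
    push_cast
    convert h using 2 <;> simp only [sq_abs, x, y] <;> ring
  · rcases le_total 0 x with hx0 | hx0
    · refine ⟨-p - 1, -q - 1, ?_⟩
      rw [abs_of_nonneg hx0] at h
      push_cast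
      convert h using 3 <;> simp only [x, y] <;> ring
    · refine ⟨-p, -q - 1, ?_⟩
      rw [abs_of_nonpos hx0] at h
      push_cast
      convert h using 2
      · simp only [x]; ring
      · simp only [y]; ring

theorem exists_mem_Zω_normSq_add_le (z : ℂ) : ∃ τ ∈ Zω, normSq (z + τ) ≤ 1 / 3 := by
  obtain ⟨a, b, h⟩ := exists_int_sq_add_sq_le z.re z.im
  refine ⟨a + b * ω, ⟨a, b, rfl⟩, ?_⟩
  rwa [normSq_apply, add_re, add_im, re_intCast_add_intCast_mul_ω, im_intCast_add_intCast_mul_ω,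
    ← sq, ← sq, ← add_sub_assoc]

lemma exists_emod_two_eq_abs_add_mul_le {s : ℝ} (hs : 0 < s) (Y : ℝ) (m : ℤ) :
    ∃ k : ℤ, k % 2 = m % 2 ∧ |Y + s * k / 2| ≤ s / 2 := by
  set X := (Y + s * m / 2) / s
  refine ⟨m - 2 * round X, by omega, ?_⟩
  have h : Y + s * ((m - 2 * round X : ℤ) : ℝ) / 2 = s * (X - round X) := by
    simp only [X]; push_cast; field_simp; ring
  rw [h, abs_mul, abs_of_pos hs]
  linarith [mul_le_mul_of_nonneg_left (abs_sub_round X) hs.le]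

lemma conjTranspose_mul_Jm_mul_apply (G : Matrix (Fin 4) (Fin 4) ℂ) (i j : Fin 4) :
    (Gᴴ * Jm * G) i j =
      conj (G 0 i) * G 3 j + conj (G 1 i) * G 1 j + conj (G 2 i) * G 2 j +
        conj (G 3 i) * G 0 j := by
  simp [Matrix.mul_apply, Fin.sum_univ_four, Jm]
  ring

lemma two_mul_re_div_add_normSq_div_add_normSq_div {G : Matrix (Fin 4) (Fin 4) ℂ}
    (hG : Gᴴ * Jm * G = Jm) (hd : G 3 0 ≠ 0) :
    2 * (G 0 0 / G 3 0).re + normSq (G 1 0 / G 3 0) + normSq (G 2 0 / G 3 0) = 0 := by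
  have h := congrArg re (congrFun (congrFun hG 0) 0)
  rw [conjTranspose_mul_Jm_mul_apply] at h
  simp only [Jm, of_apply, cons_val', cons_val_zero, cons_val_fin_one, zero_re, add_re, mul_re,
    conj_re, conj_im, ← normSq_eq_conj_mul_self, ofReal_re] at h
  have hd' : normSq (G 3 0) ≠ 0 := normSq_eq_zero.not.2 hd
  rw [normSq_div, normSq_div, div_re]
  field_simp
  linear_combination h

lemma Rmat_mul_N_mul_apply_three_zero (G : Matrix (Fin 4) (Fin 4) ℂ) (τ₁ τ₂ : ℂ) (t : ℝ) :
    (Rmat * N τ₁ τ₂ t * G) 3 0 =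
      G 0 0 - conj τ₁ * G 1 0 - conj τ₂ * G 2 0 +
        (-((normSq τ₁ : ℂ) + normSq τ₂) + I * t) / 2 * G 3 0 := by
  simp [Matrix.mul_apply, Fin.sum_univ_four, Rmat, N]
  ring

lemma re_sub_conj_mul_sub_conj_mul (α β γ τ₁ τ₂ : ℂ) :
    (α - conj τ₁ * β - conj τ₂ * γ).re - (normSq τ₁ + normSq τ₂) / 2 =
      (2 * α.re + normSq β + normSq γ) / 2 - (normSq (β + τ₁) + normSq (γ + τ₂)) / 2 := by
  simp only [sub_re, mul_re, conj_re, conj_im, normSq_apply, add_re, add_im]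
  ring

theorem stmt11_general (G : Matrix (Fin 4) (Fin 4) ℂ) (hG : Gᴴ * Jm * G = Jm)
    (h41 : G 3 0 ≠ 0) :
    ∃ τ₁ τ₂ : ℂ, τ₁ ∈ Zω ∧ τ₂ ∈ Zω ∧
      ∃ k m : ℤ, Complex.normSq τ₁ + Complex.normSq τ₂ = (m : ℝ) ∧ k % 2 = m % 2 ∧
        ‖(Rmat * N τ₁ τ₂ (Real.sqrt 3 * (k : ℝ)) * G) 3 0‖ ^ 2 ≤
          (31 / 36) * ‖G 3 0‖ ^ 2 := by
  set d := G 3 0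
  obtain ⟨τ₁, hτ₁, hβ⟩ := exists_mem_Zω_normSq_add_le (G 1 0 / d)
  obtain ⟨τ₂, hτ₂, hγ⟩ := exists_mem_Zω_normSq_add_le (G 2 0 / d)
  obtain ⟨m₁, hm₁⟩ := exists_normSq_eq_intCast_of_mem_Zω hτ₁
  obtain ⟨m₂, hm₂⟩ := exists_normSq_eq_intCast_of_mem_Zω hτ₂
  set w := G 0 0 / d - conj τ₁ * (G 1 0 / d) - conj τ₂ * (G 2 0 / d)
  obtain ⟨k, hk, him⟩ :=
    exists_emod_two_eq_abs_add_mul_le (by positivity : (0 : ℝ) < √3) w.im (m₁ + m₂)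
  refine ⟨τ₁, τ₂, hτ₁, hτ₂, k, m₁ + m₂, by push_cast [hm₁, hm₂]; rfl, hk, ?_⟩
  set E := w + (-((normSq τ₁ : ℂ) + normSq τ₂) + I * (√3 * k : ℝ)) / 2
  have hentry : (Rmat * N τ₁ τ₂ (√3 * k) * G) 3 0 = d * E := by
    rw [Rmat_mul_N_mul_apply_three_zero]
    simp only [E, w]
    field_simp
    ring
  have hEre : E.re = -(normSq (G 1 0 / d + τ₁) + normSq (G 2 0 / d + τ₂)) / 2 := by
    have hwre : E.re = w.re - (normSq τ₁ + normSq τ₂) / 2 := by simp [E]; ring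
    rw [hwre, re_sub_conj_mul_sub_conj_mul, two_mul_re_div_add_normSq_div_add_normSq_div hG h41]
    ring
  have hEim : E.im = w.im + √3 * k / 2 := by simp [E]
  have hnormE : ‖E‖ ^ 2 ≤ 31 / 36 := by
    rw [Complex.sq_norm, normSq_apply, hEre, hEim]
    nlinarith [abs_le.1 him, normSq_nonneg (G 1 0 / d + τ₁), normSq_nonneg (G 2 0 / d + τ₂),
      Real.sq_sqrt (show (0 : ℝ) ≤ 3 by norm_num)]
  rw [hentry, norm_mul, mul_pow, mul_comm]
  gcongr

/-- Descent step: if G ∈ U(3,1; Z[ω]) has G₄₁ ≠ 0, one can decrease |G₄₁|² by a factor of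
31/36 by multiplying by R·N_(τ,t) for suitable τ ∈ Z[ω]² and t = √3·k with k of the right
parity. -/
theorem stmt11 (G : Matrix (Fin 4) (Fin 4) ℂ) (hG : Gᴴ * Jm * G = Jm)
    (hent : ∀ i j, G i j ∈ Zω) (h41 : G 3 0 ≠ 0) :
    ∃ τ₁ τ₂ : ℂ, τ₁ ∈ Zω ∧ τ₂ ∈ Zω ∧
      ∃ k m : ℤ, Complex.normSq τ₁ + Complex.normSq τ₂ = (m : ℝ) ∧ k % 2 = m % 2 ∧
        ‖(Rmat * N τ₁ τ₂ (Real.sqrt 3 * (k : ℝ)) * G) 3 0‖ ^ 2 ≤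
          (31 / 36) * ‖G 3 0‖ ^ 2 :=
  stmt11_general G hG h41
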